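/- Let X_0, ..., X_M ∈ ℝ^d and ΔX_j = X_j − X_{j−1}. Define the discrete signature coefficients by S_{0}(w) = [w = ε] and S_j(w) = Σ_{w = u ∘ v} S_{j−1}(u)·E_j(v) with E_j(v) = (1/|v|!)Π_r ΔX_j^{(v_r)}. Also define the backward coefficients R_M(w) = [w = ε] and R_{j}(w) = Σ_{w = u ∘ v} E_{j+1}(u)·R_{j+1}(v) for j = M−1, ..., 0. Then for every word w and every j ∈ {0,...,M}: Σ_{w = u ∘ v} S_j(u)·R_j(v) = S_M(w). (Chen's relation for the discrete signature: S_{0,T} = S_{0,t_j} ⊗ S_{t_j,T}.) -/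
import Mathlib


/-- Tensor-exponential coefficient of an increment `ΔX` at a word `v`:
`E(v) = (1/|v|!) ∏_r ΔX^{(v_r)}`. -/
noncomputable def expCoeff {d : ℕ} (ΔX : Fin d → ℝ) (v : List (Fin d)) : ℝ :=
  (v.map ΔX).prod / (Nat.factorial v.length)

/-- Forward discrete signature: `S_0(w) = [w = ε]`,
`S_j(w) = Σ_{w = u ∘ v} S_{j-1}(u) · E_j(v)`, the `j`-th step using increment `ΔX j`. -/
noncomputable def Sig {d : ℕ} (ΔX : ℕ → Fin d → ℝ) : ℕ → List (Fin d) → ℝ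
  | 0, w => if w = [] then 1 else 0
  | j + 1, w =>
      ∑ k ∈ Finset.range (w.length + 1),
        Sig ΔX j (w.take k) * expCoeff (ΔX (j + 1)) (w.drop k)

/-- Backward coefficients, indexed by the number `i` of remaining steps, so that
`Back ΔX M i = R_{M-i}` with `R_M(w) = [w = ε]` and
`R_j(w) = Σ_{w = u ∘ v} E_{j+1}(u) · R_{j+1}(v)`. -/
noncomputable def Back {d : ℕ} (ΔX : ℕ → Fin d → ℝ) (M : ℕ) : ℕ → List (Fin d) → ℝ
  | 0, w => if w = [] then 1 else 0
  | i + 1, w =>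
      ∑ k ∈ Finset.range (w.length + 1),
        expCoeff (ΔX (M - i)) (w.take k) * Back ΔX M i (w.drop k)


lemma split3 {d : ℕ} (w : List (Fin d)) (f g h : List (Fin d) → ℝ) :
    (∑ k ∈ Finset.range (w.length + 1), f (w.take k) *
      ∑ m ∈ Finset.range ((w.drop k).length + 1), g ((w.drop k).take m) * h ((w.drop k).drop m))
    = ∑ n ∈ Finset.range (w.length + 1),
        (∑ k ∈ Finset.range (n + 1), f (w.take k) * g ((w.take n).drop k)) * h (w.drop n) := by
  simp only [Finset.mul_sum, Finset.sum_mul]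
  rw [Finset.sum_sigma', Finset.sum_sigma']
  apply Finset.sum_nbij' (i := fun p => ⟨p.1 + p.2, p.1⟩) (j := fun p => ⟨p.2, p.1 - p.2⟩)
  · rintro ⟨k, m⟩ hp
    simp only [Finset.mem_sigma, Finset.mem_range, List.length_drop] at *
    omega
  · rintro ⟨n, k⟩ hp
    simp only [Finset.mem_sigma, Finset.mem_range, List.length_drop] at *
    omega
  · rintro ⟨k, m⟩ hp; simp
  · rintro ⟨n, k⟩ hp
    simp only [Finset.mem_sigma, Finset.mem_range] at hp
    simp [Nat.add_sub_cancel' (Nat.lt_succ_iff.mp hp.2)]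
  · rintro ⟨k, m⟩ hp
    simp only [Finset.mem_sigma, Finset.mem_range, List.length_drop] at hp
    have h1 : (w.drop k).take m = (w.take (k + m)).drop k := by
      rw [List.drop_take, Nat.add_sub_cancel_left]
    have h2 : (w.drop k).drop m = w.drop (k + m) := by
      rw [List.drop_drop, Nat.add_comm]
    rw [h1, h2, mul_assoc]

theorem discrete_chen {d : ℕ} (ΔX : ℕ → Fin d → ℝ) (M : ℕ)
    (w : List (Fin d)) (j : ℕ) (hj : j ≤ M) :
    (∑ k ∈ Finset.range (w.length + 1),
        Sig ΔX j (w.take k) * Back ΔX M (M - j) (w.drop k)) = Sig ΔX M w := by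
  obtain ⟨i, rfl⟩ : ∃ i, M = j + i := ⟨M - j, by omega⟩
  clear hj
  rw [Nat.add_sub_cancel_left]
  induction i generalizing j w with
  | zero =>
    rw [Finset.sum_eq_single w.length]
    · simp [Back]
    · intro k hk hne
      have : ¬ (w.drop k = []) := by
        simp only [List.drop_eq_nil_iff]
        intro h; exact hne (by simp at hk; omega)
      simp [Back, this]
    · simp
  | succ i ih =>
    have hM : j + (i + 1) - i = j + 1 := by omega
    simp only [Back, hM]
    rw [split3]
    have key : ∀ n ∈ Finset.range (w.length + 1),
        (∑ k ∈ Finset.range (n + 1), Sig ΔX j (w.take k)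
          * expCoeff (ΔX (j + 1)) ((w.take n).drop k)) * Back ΔX (j + (i+1)) i (w.drop n)
        = Sig ΔX (j+1) (w.take n) * Back ΔX (j + (i+1)) i (w.drop n) := by
      intro n hn
      simp only [Finset.mem_range] at hn
      congr 1
      rw [show Sig ΔX (j+1) (w.take n) = ∑ k ∈ Finset.range ((w.take n).length + 1),
          Sig ΔX j ((w.take n).take k) * expCoeff (ΔX (j + 1)) ((w.take n).drop k) from rfl]
      have hlen : (w.take n).length = n := by simp; omega
      rw [hlen]
      apply Finset.sum_congr rfl
      intro k hk
      simp only [Finset.mem_range] at hk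
      rw [List.take_take, Nat.min_eq_left (by omega)]
    rw [Finset.sum_congr rfl key]
    have := ih w (j + 1)
    rw [show j + 1 + i = j + (i + 1) by omega] at this
    exact this
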